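/- If the directed graph 𝒢_g is strongly connected, then the map G_g is regular on (X, d): the set of periodic points of G_g is dense in X. -/

import Mathlib

/-!
Given `(x, m)`, follow the first `K + 1` labels of `m` from `x` and then, by strong connectivity,
a path back to `x`. Repeating the resulting closed walk `W` forever gives a label sequence `m'`
with `(x, m')` fixed by `G_g^|W|`; since `m'` agrees with `m` on the first `K + 1` places,
`d((x, m), (x, m')) ≤ 10^-(K+1)`.
-/

open Filter

def hamB {N : ℕ} (x y : Fin N → Bool) : ℕ :=
  (Finset.univ.filter fun i => x i ≠ y i).card

noncomputable def dE {N : ℕ} (x y : Fin N → Bool) : ℝ := hamB x y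

noncomputable def dM {N : ℕ} (m m' : ℕ → Fin N → Bool) : ℝ :=
  (9 / (N : ℝ)) * ∑' k : ℕ, (hamB (m k) (m' k) : ℝ) / 10 ^ (k + 1)

noncomputable def dX {N : ℕ} (p q : (Fin N → Bool) × (ℕ → Fin N → Bool)) : ℝ :=
  dE p.1 q.1 + dM p.2 q.2

def Gmap {N : ℕ} (g : (Fin N → Bool) → (Fin N → Bool) → (Fin N → Bool))
    (p : (Fin N → Bool) × (ℕ → Fin N → Bool)) : (Fin N → Bool) × (ℕ → Fin N → Bool) :=
  (g (p.2 0) p.1, fun k => p.2 (k + 1))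


/-- End vertex of the path starting at `x` and following the edge labels in `L`
in the graph `𝒢_g` (an edge labeled `m` goes from `v` to `g m v`). -/
def pathEnd {N : ℕ} (g : (Fin N → Bool) → (Fin N → Bool) → (Fin N → Bool))
    (x : Fin N → Bool) (L : List (Fin N → Bool)) : Fin N → Bool :=
  L.foldl (fun v m => g m v) x

lemma hamB_self {N : ℕ} (x : Fin N → Bool) : hamB x x = 0 := by
  simp [hamB]

lemma hamB_le {N : ℕ} (x y : Fin N → Bool) : hamB x y ≤ N :=
  (Finset.card_filter_le _ _).trans_eq (Finset.card_fin N)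

section dM

variable {N : ℕ} (m m' : ℕ → Fin N → Bool)

lemma hamB_div_pow_le (k : ℕ) :
    (hamB (m k) (m' k) : ℝ) / 10 ^ (k + 1) ≤ N / 10 * (1 / 10) ^ k := by
  rw [one_div_pow, div_mul_div_comm, mul_one, ← pow_succ']
  gcongr
  exact_mod_cast hamB_le _ _

lemma summable_hamB_div_pow : Summable fun k => (hamB (m k) (m' k) : ℝ) / 10 ^ (k + 1) :=
  .of_nonneg_of_le (fun _ => by positivity) (hamB_div_pow_le m m')
    ((summable_geometric_of_lt_one (by norm_num) (by norm_num)).mul_left _)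

variable {m m'}

lemma dM_le_of_eq_of_lt {K : ℕ} (h : ∀ k < K, m k = m' k) : dM m m' ≤ (1 / 10) ^ K := by
  set f := fun k => (hamB (m k) (m' k) : ℝ) / 10 ^ (k + 1)
  have hf : Summable f := summable_hamB_div_pow m m'
  have htail : ∑' k, f k = ∑' k, f (k + K) := by
    rw [← hf.sum_add_tsum_nat_add K, Finset.sum_eq_zero fun k hk => ?_, zero_add]
    simp [f, h k (Finset.mem_range.1 hk), hamB_self]
  have hgeom : Summable fun k : ℕ => (1 / 10 : ℝ) ^ k :=
    summable_geometric_of_lt_one (by norm_num) (by norm_num)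
  have hbound : ∑' k, f (k + K) ≤ N / 9 * (1 / 10) ^ K := calc
    ∑' k, f (k + K) ≤ ∑' k, N / 10 * (1 / 10) ^ K * (1 / 10 : ℝ) ^ k :=
        (hf.comp_injective (add_left_injective K)).tsum_le_tsum
          (fun k => (hamB_div_pow_le m m' (k + K)).trans_eq (by ring)) (hgeom.mul_left _)
    _ = N / 9 * (1 / 10) ^ K := by
        rw [tsum_mul_left, tsum_geometric_of_lt_one (by norm_num) (by norm_num)]
        ring
  calc dM m m' = 9 / N * ∑' k, f (k + K) := by rw [dM, htail]
    _ ≤ 9 / N * (N / 9 * (1 / 10) ^ K) := by gcongr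
    _ ≤ (1 / 10) ^ K := by
        rcases N.eq_zero_or_pos with rfl | hN
        · simp
        · field_simp
          rfl

end dM

lemma dX_mk_mk_left {N : ℕ} (x : Fin N → Bool) (m m' : ℕ → Fin N → Bool) :
    dX (x, m) (x, m') = dM m m' := by
  simp [dX, dE, hamB_self]

section Gmap

variable {N : ℕ} (g : (Fin N → Bool) → (Fin N → Bool) → (Fin N → Bool))

lemma pathEnd_append (x : Fin N → Bool) (L₁ L₂ : List (Fin N → Bool)) :
    pathEnd g x (L₁ ++ L₂) = pathEnd g (pathEnd g x L₁) L₂ :=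
  List.foldl_append

lemma Gmap_iterate (n : ℕ) (p : (Fin N → Bool) × (ℕ → Fin N → Bool)) :
    (Gmap g)^[n] p =
      (pathEnd g p.1 (List.ofFn fun i : Fin n => p.2 i), fun k => p.2 (k + n)) := by
  induction n generalizing p with
  | zero => simp [pathEnd]
  | succ n ih =>
    rw [Function.iterate_succ_apply, ih]
    simp [Gmap, pathEnd, List.ofFn_succ, add_assoc]

variable {g}

lemma Gmap_iterate_eq_self {n : ℕ} {p : (Fin N → Bool) × (ℕ → Fin N → Bool)}
    (hcycle : pathEnd g p.1 (List.ofFn fun i : Fin n => p.2 i) = p.1)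
    (hper : ∀ k, p.2 (k + n) = p.2 k) : (Gmap g)^[n] p = p := by
  rw [Gmap_iterate, hcycle]
  simp only [hper]

end Gmap

section cycleSeq

variable {α : Type*} (W : List α) (d : α)

/-- The periodic sequence `W W W …`; the default `d` only matters when `W = []`. -/
def cycleSeq (k : ℕ) : α := W.getD (k % W.length) d

lemma cycleSeq_add_length (k : ℕ) : cycleSeq W d (k + W.length) = cycleSeq W d k := by
  simp [cycleSeq]

lemma cycleSeq_of_lt {k : ℕ} (hk : k < W.length) : cycleSeq W d k = W[k] := by
  rw [cycleSeq, Nat.mod_eq_of_lt hk, List.getD_eq_getElem]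

lemma ofFn_cycleSeq : List.ofFn (fun i : Fin W.length => cycleSeq W d i) = W :=
  List.ext_getElem (by simp) fun i _ hi => by simp [cycleSeq_of_lt W d hi]

end cycleSeq

theorem regular_of_strongly_connected_general (N : ℕ)
    (g : (Fin N → Bool) → (Fin N → Bool) → (Fin N → Bool))
    (hsc : ∀ x y : Fin N → Bool, ∃ L : List (Fin N → Bool), pathEnd g x L = y) :
    ∀ p : (Fin N → Bool) × (ℕ → Fin N → Bool), ∀ ε > (0 : ℝ),
      ∃ q, dX p q < ε ∧ ∃ n ≥ 1, (Gmap g)^[n] q = q := by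
  rintro ⟨x, m⟩ ε hε
  have hpow : Tendsto (fun K => (1 / 10 : ℝ) ^ K) atTop (nhds 0) :=
    tendsto_pow_atTop_nhds_zero_of_lt_one (by norm_num) (by norm_num)
  obtain ⟨K, hK⟩ := eventually_atTop.1 (hpow.eventually (gt_mem_nhds hε))
  set P := List.ofFn fun i : Fin (K + 1) => m i
  obtain ⟨L, hL⟩ := hsc (pathEnd g x P) x
  set W := P ++ L
  have hagree : ∀ k < K + 1, m k = cycleSeq W x k := fun k hk => by
    rw [cycleSeq_of_lt W x (by simp [W, P]; omega),
      List.getElem_append_left (by simp [P]; omega), List.getElem_ofFn]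
  refine ⟨(x, cycleSeq W x), ?_, W.length, by simp [W, P], ?_⟩
  · rw [dX_mk_mk_left]
    exact (dM_le_of_eq_of_lt hagree).trans_lt (hK _ K.le_succ)
  · exact Gmap_iterate_eq_self (by rw [ofFn_cycleSeq, pathEnd_append, hL])
      (cycleSeq_add_length W x)

/-- if `𝒢_g` is strongly connected then `G_g` is regular:
periodic points are dense in `(X,d)`. -/
theorem regular_of_strongly_connected (N : ℕ) (hN : 1 ≤ N)
    (g : (Fin N → Bool) → (Fin N → Bool) → (Fin N → Bool))
    (hsc : ∀ x y : Fin N → Bool, ∃ L : List (Fin N → Bool), pathEnd g x L = y) :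
    ∀ p : (Fin N → Bool) × (ℕ → Fin N → Bool), ∀ ε > (0 : ℝ),
      ∃ q, dX p q < ε ∧ ∃ n ≥ 1, (Gmap g)^[n] q = q :=
  regular_of_strongly_connected_general N g hsc
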